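/- arXiv:1804.01297 — 5 statements merged into one kernel-verified Lean document; each statement's English description precedes it below -/
import Mathlib

section
/- Let N ≥ 2 and let y_1, …, y_N be distinct points in ℝ². Let f = (f_1, …, f_N) ∈ ℝ^N be nonzero with Σ_{j=1}^N f_j = 0 and Σ_{j,k=1}^N f_j f_k |y_j − y_k|² = 0. Then Σ_{j ≠ k} f_j f_k |y_j − y_k|² log(|y_j − y_k|²) > 0. -/
/-! With `u_jk = ‖y_j - y_k‖²`, put `g t = Σ f_j f_k u_jk (log (t + 1) - log (t + u_jk))`. Then
`g 0` is minus the sum in question and `g → 0` at infinity, while the two vanishing sums turn the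
derivative into `g' t = t Σ f_j f_k / (u_jk + t)`. Writing `1 / (u + t) = ∫₀^∞ e^{-s(u+t)} ds`
exhibits this Stieltjes sum as a Laplace transform of `s ↦ Σ f_j f_k e^{-s u_jk}`, which is
nonnegative because the Gaussian kernel is positive semidefinite (the exponential series of the
Gram matrix, with the Schur product theorem) and tends to `Σ f_j² > 0`. So `g` increases strictly
to `0` and `g 0 < 0`. -/

open Real Set Filter Topology

theorem lt_of_tendsto_atTop_of_hasDerivAt {φ φ' : ℝ → ℝ} {a l : ℝ}
    (hcont : ContinuousOn φ (Ici a)) (hderiv : ∀ x ∈ Ioi a, HasDerivAt φ (φ' x) x)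
    (hnonneg : ∀ x ∈ Ioi a, 0 ≤ φ' x) (hpos : ∀ᶠ x in atTop, 0 < φ' x)
    (hlim : Tendsto φ atTop (𝓝 l)) : φ a < l := by
  have hderiv_on {c : ℝ} (hc : a ≤ c) :
      ∀ x ∈ interior (Ici c), HasDerivWithinAt φ (φ' x) (interior (Ici c)) x := by
    rw [interior_Ici]
    exact fun x hx ↦ (hderiv x (hc.trans_lt hx)).hasDerivWithinAt
  have hmono : MonotoneOn φ (Ici a) :=
    monotoneOn_of_hasDerivWithinAt_nonneg (convex_Ici a) hcont (hderiv_on le_rfl)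
      (by rw [interior_Ici]; exact hnonneg)
  obtain ⟨b, hb⟩ := (hpos.and (eventually_ge_atTop a)).exists_forall_of_atTop
  have hab : a ≤ b := (hb b le_rfl).2
  have hstrict : StrictMonoOn φ (Ici b) :=
    strictMonoOn_of_hasDerivWithinAt_pos (convex_Ici b) (hcont.mono (Ici_subset_Ici.2 hab))
      (hderiv_on hab) (by rw [interior_Ici]; exact fun x hx ↦ (hb x hx.le).1)
  calc φ a ≤ φ b := hmono self_mem_Ici hab hab
    _ < φ (b + 1) := hstrict self_mem_Ici (by simp) (by linarith)
    _ ≤ l := ge_of_tendsto hlim <| (eventually_ge_atTop (b + 1)).mono fun x hx ↦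
        hmono (mem_Ici.2 (by linarith)) (mem_Ici.2 (by linarith)) hx

namespace Matrix

open scoped ComplexOrder in
theorem PosSemidef.map_pow {ι 𝕜 : Type*} [Finite ι] [RCLike 𝕜] {A : Matrix ι ι 𝕜}
    (hA : A.PosSemidef) (m : ℕ) : (A.map (· ^ m)).PosSemidef := by
  induction m with
  | zero =>
    convert posSemidef_vecMulVec_self_star (1 : ι → 𝕜) using 1
    ext; simp [vecMulVec]
  | succ m ih =>
    convert ih.hadamard hA using 1
    ext; simp [pow_succ]

theorem PosSemidef.sum_mul_mul_exp_nonneg {ι : Type*} [Fintype ι] {A : Matrix ι ι ℝ}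
    (hA : A.PosSemidef) (c : ι → ℝ) : 0 ≤ ∑ j, ∑ k, c j * c k * exp (A j k) := by
  have hseries : HasSum (fun m : ℕ ↦ ∑ j, ∑ k, c j * c k * (A j k ^ m / m.factorial))
      (∑ j, ∑ k, c j * c k * exp (A j k)) :=
    hasSum_sum fun j _ ↦ hasSum_sum fun k _ ↦ by
      rw [Real.exp_eq_exp_ℝ]
      exact (NormedSpace.expSeries_div_hasSum_exp (A j k)).mul_left (c j * c k)
  refine hseries.nonneg fun m ↦ ?_
  have := (hA.map_pow m).dotProduct_mulVec_nonneg c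
  simp only [star_trivial, dotProduct, mulVec, map_apply, Finset.mul_sum] at this
  convert div_nonneg this (Nat.cast_nonneg m.factorial)
  simp only [Finset.sum_div]
  congr! 2 with j _ k _
  ring

end Matrix

theorem sum_mul_mul_exp_neg_mul_norm_sub_sq_nonneg {ι E : Type*} [Fintype ι]
    [NormedAddCommGroup E] [InnerProductSpace ℝ E] (c : ι → ℝ) (x : ι → E) {s : ℝ} (hs : 0 ≤ s) :
    0 ≤ ∑ j, ∑ k, c j * c k * exp (-(s * ‖x j - x k‖ ^ 2)) := by
  have hgram : ((2 * s) • Matrix.gram ℝ x).PosSemidef :=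
    (Matrix.posSemidef_gram ℝ x).smul (by positivity)
  convert hgram.sum_mul_mul_exp_nonneg (fun j ↦ c j * exp (-(s * ‖x j‖ ^ 2))) using 3 with j _ k _
  rw [norm_sub_sq_real, Matrix.smul_apply, Matrix.gram_apply, smul_eq_mul,
    show -(s * (‖x j‖ ^ 2 - 2 * inner ℝ (x j) (x k) + ‖x k‖ ^ 2)) =
      -(s * ‖x j‖ ^ 2) + -(s * ‖x k‖ ^ 2) + 2 * s * inner ℝ (x j) (x k) by ring, exp_add, exp_add]
  ring

section KernelSums

variable {ι : Type*} [Fintype ι] {u : ι → ι → ℝ} (f : ι → ℝ)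

theorem tendsto_sum_mul_mul_exp_neg_mul_atTop (hdiag : ∀ j, u j j = 0)
    (hoff : Pairwise fun j k ↦ 0 < u j k) :
    Tendsto (fun s ↦ ∑ j, ∑ k, f j * f k * exp (-(s * u j k))) atTop (𝓝 (∑ j, f j ^ 2)) := by
  classical
  have hdiagonal : ∑ j, f j ^ 2 = ∑ j, ∑ k, if j = k then f j * f k else 0 := by
    simp [sq]
  rw [hdiagonal]
  refine tendsto_finsetSum _ fun j _ ↦ tendsto_finsetSum _ fun k _ ↦ ?_
  rcases eq_or_ne j k with rfl | hjk
  · simp [hdiag]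
  · rw [if_neg hjk]
    simpa using (tendsto_exp_neg_atTop_nhds_zero.comp
      (tendsto_id.atTop_mul_const (hoff hjk))).const_mul (f j * f k)

variable {f}

theorem sum_mul_mul_div_add_pos (hdiag : ∀ j, u j j = 0) (hoff : Pairwise fun j k ↦ 0 < u j k)
    (hG : ∀ s, 0 ≤ s → 0 ≤ ∑ j, ∑ k, f j * f k * exp (-(s * u j k))) (hf : f ≠ 0)
    {t : ℝ} (ht : 0 < t) : 0 < ∑ j, ∑ k, f j * f k / (u j k + t) := by
  have hu : ∀ j k, 0 < u j k + t := fun j k ↦ by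
    rcases eq_or_ne j k with rfl | hjk
    · simpa [hdiag] using ht
    · exact add_pos (hoff hjk) ht
  -- `K s = ∫₀ˢ Σ f_j f_k e^{-σ (u_jk + t)} dσ`
  set K : ℝ → ℝ := fun s ↦ ∑ j, ∑ k, f j * f k * ((1 - exp (-(s * (u j k + t)))) / (u j k + t))
  have hterm : ∀ r ≠ 0, ∀ s, HasDerivAt (fun s ↦ (1 - exp (-(s * r))) / r) (exp (-(s * r))) s :=
    fun r hr s ↦ (((hasDerivAt_mul_const (x := s) r).fun_neg.exp).const_sub 1).div_const r
      |>.congr_deriv (by field_simp)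
  have hK : ∀ s, HasDerivAt K (exp (-(s * t)) * ∑ j, ∑ k, f j * f k * exp (-(s * u j k))) s := by
    intro s
    have hsplit : ∀ j k, exp (-(s * t)) * (f j * f k * exp (-(s * u j k))) =
        f j * f k * exp (-(s * (u j k + t))) := fun j k ↦ by
      rw [mul_add, neg_add, exp_add]; ring
    simp only [Finset.mul_sum, hsplit]
    exact HasDerivAt.fun_sum fun j _ ↦ HasDerivAt.fun_sum fun k _ ↦
      (hterm _ (hu j k).ne' s).const_mul (f j * f k)
  have hK0 : K 0 = 0 := by simp [K]
  have hlim : Tendsto K atTop (𝓝 (∑ j, ∑ k, f j * f k / (u j k + t))) := by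
    refine tendsto_finsetSum _ fun j _ ↦ tendsto_finsetSum _ fun k _ ↦ ?_
    simpa [div_eq_mul_inv] using ((tendsto_exp_neg_atTop_nhds_zero.comp
      (tendsto_id.atTop_mul_const (hu j k))).const_sub 1).div_const (u j k + t) |>.const_mul
      (f j * f k)
  have hsq : 0 < ∑ j, f j ^ 2 := by
    obtain ⟨j, hj⟩ := Function.ne_iff.mp hf
    exact Finset.sum_pos' (fun j _ ↦ sq_nonneg (f j)) ⟨j, Finset.mem_univ j, sq_pos_of_ne_zero hj⟩
  rw [← hK0]
  refine lt_of_tendsto_atTop_of_hasDerivAt (fun s _ ↦ (hK s).continuousAt.continuousWithinAt)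
    (fun s _ ↦ hK s) (fun s hs ↦ mul_nonneg (exp_pos _).le (hG s (le_of_lt hs))) ?_ hlim
  filter_upwards [(tendsto_sum_mul_mul_exp_neg_mul_atTop f hdiag hoff).eventually_const_lt hsq]
    with s hs using mul_pos (exp_pos _) hs

theorem sum_mul_mul_mul_log_pos (hdiag : ∀ j, u j j = 0) (hoff : Pairwise fun j k ↦ 0 < u j k)
    (hG : ∀ s, 0 ≤ s → 0 ≤ ∑ j, ∑ k, f j * f k * exp (-(s * u j k))) (hf : f ≠ 0)
    (hsum : ∑ j, f j = 0) (hu : ∑ j, ∑ k, f j * f k * u j k = 0) :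
    0 < ∑ j, ∑ k, f j * f k * (u j k * log (u j k)) := by
  have hu0 : ∀ j k, 0 ≤ u j k := fun j k ↦ by
    rcases eq_or_ne j k with rfl | hjk
    exacts [(hdiag j).ge, (hoff hjk).le]
  set g : ℝ → ℝ := fun t ↦ ∑ j, ∑ k, f j * f k * (u j k * (log (t + 1) - log (t + u j k)))
  set g' : ℝ → ℝ := fun t ↦ ∑ j, ∑ k, f j * f k * (u j k * (1 / (t + 1) - 1 / (t + u j k)))
  have hg0 : g 0 = -∑ j, ∑ k, f j * f k * (u j k * log (u j k)) := by
    simp [g]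
  have hderiv : ∀ t ∈ Ioi (0 : ℝ), HasDerivAt g (g' t) t := fun t (ht : 0 < t) ↦
    HasDerivAt.fun_sum fun j _ ↦ HasDerivAt.fun_sum fun k _ ↦
      ((((hasDerivAt_id t).add_const 1).log (by rw [id]; positivity)).sub
        (((hasDerivAt_id t).add_const (u j k)).log (by rw [id]; linarith [hu0 j k]))
        |>.const_mul (u j k)).const_mul (f j * f k)
  have hcont : ContinuousOn g (Ici 0) := by
    refine continuousOn_finsetSum _ fun j _ ↦ continuousOn_finsetSum _ fun k _ ↦ ?_
    rcases eq_or_ne j k with rfl | hjk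
    · simp [hdiag, continuousOn_const]
    · refine continuousOn_const.mul (continuousOn_const.mul ?_)
      refine ((continuous_add_const 1).continuousOn.log ?_).sub
        ((continuous_add_const (u j k)).continuousOn.log ?_) <;> intro t (ht : 0 ≤ t)
      · positivity
      · linarith [hoff hjk]
  have hlim : Tendsto g atTop (𝓝 0) := by
    rw [show (0 : ℝ) = ∑ j : ι, ∑ k : ι, f j * f k * (u j k * (0 - 0)) by simp]
    refine tendsto_finsetSum _ fun j _ ↦ tendsto_finsetSum _ fun k _ ↦ ?_
    have h := (Real.tendsto_log_comp_add_sub_log 1).sub (Real.tendsto_log_comp_add_sub_log (u j k))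
    refine ((h.congr fun t ↦ ?_).const_mul (u j k)).const_mul (f j * f k)
    ring
  have hpos : ∀ t ∈ Ioi (0 : ℝ), 0 < g' t := by
    intro t (ht : 0 < t)
    have hQ := sum_mul_mul_div_add_pos hdiag hoff hG hf ht
    have hterm : ∀ j k, f j * f k * (u j k * (1 / (t + 1) - 1 / (t + u j k))) =
        f j * f k * u j k / (t + 1) - f j * f k + t * (f j * f k / (u j k + t)) := fun j k ↦ by
      have : t + u j k ≠ 0 := by linarith [hu0 j k]
      have : u j k + t ≠ 0 := by linarith [hu0 j k]
      field_simp
      ring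
    simp only [g', hterm, Finset.sum_add_distrib, Finset.sum_sub_distrib, ← Finset.sum_div,
      ← Finset.mul_sum, ← Finset.sum_mul, hu, hsum]
    simpa using mul_pos ht hQ
  have := lt_of_tendsto_atTop_of_hasDerivAt hcont hderiv (fun t ht ↦ (hpos t ht).le)
    ((eventually_gt_atTop 0).mono hpos) hlim
  linarith

end KernelSums

theorem sum_mul_mul_norm_sub_sq_mul_log_pos {ι E : Type*} [Fintype ι] [NormedAddCommGroup E]
    [InnerProductSpace ℝ E] {y : ι → E} (hy : Function.Injective y) {f : ι → ℝ} (hf : f ≠ 0)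
    (hsum : ∑ j, f j = 0) (hy2 : ∑ j, ∑ k, f j * f k * ‖y j - y k‖ ^ 2 = 0) :
    0 < ∑ j, ∑ k, f j * f k * (‖y j - y k‖ ^ 2 * log (‖y j - y k‖ ^ 2)) :=
  sum_mul_mul_mul_log_pos (u := fun j k ↦ ‖y j - y k‖ ^ 2) (by simp)
    (fun _ _ hjk ↦ pow_pos (norm_pos_iff.2 (sub_ne_zero.2 (hy.ne hjk))) 2)
    (fun _ hs ↦ sum_mul_mul_exp_neg_mul_norm_sub_sq_nonneg f y hs) hf hsum hy2

theorem stmt_7_general (N : ℕ)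
    (y : Fin N → EuclideanSpace ℝ (Fin 2)) (hy : Function.Injective y)
    (f : Fin N → ℝ) (hf : f ≠ 0)
    (hsum : ∑ j, f j = 0)
    (hG1 : ∑ j, ∑ k, f j * f k * ‖y j - y k‖^2 = 0) :
    0 < ∑ j, ∑ k,
      (if j ≠ k then f j * f k * ‖y j - y k‖^2 * Real.log (‖y j - y k‖^2) else 0) := by
  convert sum_mul_mul_norm_sub_sq_mul_log_pos hy hf hsum hG1 using 3 with j _ k _
  rcases eq_or_ne j k with rfl | hjk
  · simp
  · rw [if_pos hjk, mul_assoc]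

/-- If `y_1, …, y_N` are distinct points of `ℝ²`, `f ≠ 0`,
`Σ f_j = 0` and `Σ_{j,k} f_j f_k |y_j - y_k|² = 0`, then
`Σ_{j ≠ k} f_j f_k |y_j - y_k|² log(|y_j - y_k|²) > 0`. -/
theorem stmt_7 (N : ℕ) (hN : 2 ≤ N)
    (y : Fin N → EuclideanSpace ℝ (Fin 2)) (hy : Function.Injective y)
    (f : Fin N → ℝ) (hf : f ≠ 0)
    (hsum : ∑ j, f j = 0)
    (hG1 : ∑ j, ∑ k, f j * f k * ‖y j - y k‖^2 = 0) :
    0 < ∑ j, ∑ k,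
      (if j ≠ k then f j * f k * ‖y j - y k‖^2 * Real.log (‖y j - y k‖^2) else 0) :=
  stmt_7_general N y hy f hf hsum hG1
end

section
/- Let N ≥ 1, let y_1, …, y_N be distinct points in ℝ², and let a = (a_1, …, a_N) ∈ ℝ^N satisfy Σ_{j=1}^N a_j = 0 and Σ_{j=1}^N a_j y_j = 0 (as a vector in ℝ²). Then the function ψ(x) = −(2π)^{-1} Σ_{j=1}^N a_j log|x − y_j| (defined for x ∉ {y_1, …, y_N}) belongs to L²(ℝ²), and there exist C > 0 and R > 0 such that |ψ(x)| ≤ C/|x|² for all |x| ≥ R. -/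
/-!
Near each pole `ψ` behaves like `log ‖x - y_j‖`, and `log² t ≤ 16 t^(-1/2)` on `(0, 1]` is
integrable near the origin of `ℝ²`, so `ψ` is locally square integrable. At infinity, expand
`log ‖x - y‖ = log ‖x‖ - ⟪x, y⟫ / ‖x‖² + O(‖y‖² / ‖x‖²)`: the monopole and dipole terms cancel
in `Σ a_j log ‖x - y_j‖` because `Σ a_j = 0` and `Σ a_j y_j = 0`, leaving `|ψ x| = O(‖x‖⁻²)`,
whose square is integrable at infinity in dimension `2 < 4`.
-/

open Real MeasureTheory
open scoped RealInnerProductSpace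

lemma abs_log_one_add_sub_self_le {t : ℝ} (ht : |t| ≤ 1 / 2) :
    |log (1 + t) - t| ≤ 2 * t ^ 2 := by
  obtain ⟨ht₁, ht₂⟩ := abs_le.1 ht
  have hpos : 0 < 1 + t := by linarith
  have hupper : log (1 + t) ≤ t := by linarith [log_le_sub_one_of_pos hpos]
  have hlower : t - t ^ 2 / (1 + t) ≤ log (1 + t) := by
    convert one_sub_inv_le_log_of_pos hpos using 1
    field_simp
    ring
  have hquot : t ^ 2 / (1 + t) ≤ 2 * t ^ 2 := by
    rw [div_le_iff₀ hpos]; nlinarith [sq_nonneg t]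
  rw [abs_sub_comm, abs_of_nonneg (by linarith)]
  linarith

lemma sq_log_le_rpow_add_sq_log_max {t : ℝ} (ht : 0 ≤ t) :
    log t ^ 2 ≤ 16 * t ^ (-(1 / 2 : ℝ)) + log (max t 1) ^ 2 := by
  rcases le_total t 1 with h1 | h1
  · rw [max_eq_right h1, log_one]
    rcases ht.eq_or_lt with rfl | h0
    · simp
    have hbound : (log t * t ^ (1 / 4 : ℝ)) ^ 2 ≤ 16 := by
      have := abs_log_mul_self_rpow_lt t (1 / 4) h0 h1 (by norm_num)
      rw [← sq_abs]; nlinarith [abs_nonneg (log t * t ^ (1 / 4 : ℝ))]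
    have hsplit : log t ^ 2 = (log t * t ^ (1 / 4 : ℝ)) ^ 2 * t ^ (-(1 / 2 : ℝ)) := by
      rw [mul_pow, ← rpow_natCast (t ^ _), ← rpow_mul h0.le, mul_assoc, ← rpow_add h0]
      norm_num
    rw [hsplit]
    nlinarith [rpow_nonneg ht (-(1 / 2 : ℝ))]
  · rw [max_eq_left h1]
    linarith [rpow_nonneg ht (-(1 / 2 : ℝ))]

section Expansion

variable {F : Type*} [NormedAddCommGroup F] [InnerProductSpace ℝ F]

lemma abs_log_norm_sub_sub_log_norm_add_inner_le {x y : F} (hx : x ≠ 0) (hy : 6 * ‖y‖ ≤ ‖x‖) :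
    |log ‖x - y‖ - log ‖x‖ + ⟪x, y⟫ / ‖x‖ ^ 2| ≤ 10 * (‖y‖ / ‖x‖) ^ 2 := by
  have hx₀ : 0 < ‖x‖ := norm_pos_iff.2 hx
  set t := (‖y‖ ^ 2 - 2 * ⟪x, y⟫) / ‖x‖ ^ 2 with ht
  have hnorm : ‖x - y‖ ^ 2 = ‖x‖ ^ 2 * (1 + t) := by
    rw [ht, norm_sub_sq_real]; field_simp; ring
  have ht_le : |t| ≤ 3 * (‖y‖ / ‖x‖) := by
    rw [ht, abs_div, abs_of_pos (pow_pos hx₀ 2), mul_div_assoc',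
      div_le_div_iff₀ (by positivity) hx₀]
    have := abs_real_inner_le_norm x y
    have : ‖y‖ ^ 2 ≤ ‖x‖ * ‖y‖ := by nlinarith [norm_nonneg y]
    calc |‖y‖ ^ 2 - 2 * ⟪x, y⟫| * ‖x‖ ≤ (‖y‖ ^ 2 + 2 * |⟪x, y⟫|) * ‖x‖ := by
          gcongr
          exact (abs_sub _ _).trans (by rw [abs_of_nonneg (sq_nonneg _), abs_mul]; norm_num)
      _ ≤ 3 * ‖y‖ * ‖x‖ ^ 2 := by nlinarith
  have ht_half : |t| ≤ 1 / 2 := ht_le.trans (by rw [mul_div_assoc', div_le_iff₀ hx₀]; linarith)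
  have h1t : 0 < 1 + t := by linarith [(abs_le.1 ht_half).1]
  have hlog : log ‖x - y‖ - log ‖x‖ = log (1 + t) / 2 := by
    have := congrArg log hnorm
    rw [log_pow, log_mul (by positivity) h1t.ne', log_pow] at this
    push_cast at this
    linarith
  have hexpand : log ‖x - y‖ - log ‖x‖ + ⟪x, y⟫ / ‖x‖ ^ 2
      = (log (1 + t) - t) / 2 + (‖y‖ / ‖x‖) ^ 2 / 2 := by
    rw [hlog, ht]; field_simp; ring
  have ht_sq : t ^ 2 ≤ 9 * (‖y‖ / ‖x‖) ^ 2 := by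
    calc t ^ 2 = |t| ^ 2 := (sq_abs t).symm
      _ ≤ (3 * (‖y‖ / ‖x‖)) ^ 2 := pow_le_pow_left₀ (abs_nonneg t) ht_le 2
      _ = 9 * (‖y‖ / ‖x‖) ^ 2 := by ring
  rw [hexpand]
  calc |(log (1 + t) - t) / 2 + (‖y‖ / ‖x‖) ^ 2 / 2|
      ≤ |log (1 + t) - t| / 2 + (‖y‖ / ‖x‖) ^ 2 / 2 := by
        refine (abs_add_le _ _).trans_eq ?_
        rw [abs_div, abs_two, abs_of_nonneg (by positivity : 0 ≤ (‖y‖ / ‖x‖) ^ 2 / 2)]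
    _ ≤ 10 * (‖y‖ / ‖x‖) ^ 2 := by
        linarith [abs_log_one_add_sub_self_le ht_half, sq_nonneg (‖y‖ / ‖x‖)]

variable {ι : Type*} [Fintype ι] (a : ι → ℝ) (y : ι → F)

lemma abs_sum_mul_log_norm_sub_le (hsum : ∑ j, a j = 0) (hmom : ∑ j, a j • y j = 0) {x : F}
    (hx : x ≠ 0) (hxy : ∀ j, 6 * ‖y j‖ ≤ ‖x‖) :
    |∑ j, a j * log ‖x - y j‖| ≤ 10 * (∑ j, |a j| * ‖y j‖ ^ 2) / ‖x‖ ^ 2 := by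
  have hmonopole : ∑ j, a j * log ‖x‖ = 0 := by rw [← Finset.sum_mul, hsum, zero_mul]
  have hdipole : ∑ j, a j * (⟪x, y j⟫ / ‖x‖ ^ 2) = 0 := by
    simp_rw [mul_div_assoc', ← Finset.sum_div, ← real_inner_smul_right, ← inner_sum, hmom,
      inner_zero_right, zero_div]
  have hcancel : ∑ j, a j * log ‖x - y j‖
      = ∑ j, a j * (log ‖x - y j‖ - log ‖x‖ + ⟪x, y j⟫ / ‖x‖ ^ 2) := by
    simp only [mul_add, mul_sub, Finset.sum_add_distrib, Finset.sum_sub_distrib, hmonopole,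
      hdipole, sub_zero, add_zero]
  calc |∑ j, a j * log ‖x - y j‖|
      ≤ ∑ j, |a j * (log ‖x - y j‖ - log ‖x‖ + ⟪x, y j⟫ / ‖x‖ ^ 2)| :=
        hcancel ▸ Finset.abs_sum_le_sum_abs _ _
    _ ≤ ∑ j, |a j| * (10 * (‖y j‖ / ‖x‖) ^ 2) := Finset.sum_le_sum fun j _ => by
        rw [abs_mul]
        exact mul_le_mul_of_nonneg_left (abs_log_norm_sub_sub_log_norm_add_inner_le hx (hxy j))
          (abs_nonneg _)
    _ = 10 * (∑ j, |a j| * ‖y j‖ ^ 2) / ‖x‖ ^ 2 := by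
        simp only [Finset.mul_sum, Finset.sum_div]
        exact Finset.sum_congr rfl fun j _ => by ring

lemma exists_abs_sum_mul_log_norm_sub_le_div_sq (hsum : ∑ j, a j = 0)
    (hmom : ∑ j, a j • y j = 0) :
    ∃ C > (0 : ℝ), ∃ R > (0 : ℝ), ∀ x : F, R ≤ ‖x‖ →
      |∑ j, a j * log ‖x - y j‖| ≤ C / ‖x‖ ^ 2 := by
  have hy : ∀ j, 6 * ‖y j‖ ≤ 6 * ∑ i, ‖y i‖ := fun j =>
    mul_le_mul_of_nonneg_left (Finset.single_le_sum (fun i _ => norm_nonneg (y i))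
      (Finset.mem_univ j)) (by norm_num)
  have hC : 0 ≤ 10 * ∑ j, |a j| * ‖y j‖ ^ 2 := by positivity
  refine ⟨10 * ∑ j, |a j| * ‖y j‖ ^ 2 + 1, by linarith, 6 * ∑ i, ‖y i‖ + 1,
    by positivity, fun x hx => ?_⟩
  have hx₀ : x ≠ 0 := norm_pos_iff.1 (lt_of_lt_of_le (by positivity) hx)
  refine (abs_sum_mul_log_norm_sub_le a y hsum hmom hx₀ fun j => by linarith [hy j]).trans ?_
  gcongr
  linarith

end Expansion

theorem MeasureTheory.LocallyIntegrable.comp_sub_right {E G : Type*} [AddGroup E]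
    [TopologicalSpace E] [IsTopologicalAddGroup E] [MeasurableSpace E] [BorelSpace E]
    [NormedAddCommGroup G] {μ : Measure E} [μ.IsAddRightInvariant] {f : E → G}
    (hf : LocallyIntegrable f μ) (y : E) :
    LocallyIntegrable (fun x => f (x - y)) μ := by
  rw [← map_sub_right_eq_self μ y] at hf
  exact (locallyIntegrable_map_homeomorph (Homeomorph.subRight y)).1 hf

section LocalIntegrability

variable {E : Type*} [NormedAddCommGroup E] [NormedSpace ℝ E] [FiniteDimensional ℝ E]
  [MeasurableSpace E] [BorelSpace E] {μ : Measure E} [μ.IsAddHaarMeasure]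

lemma locallyIntegrable_sq_log_norm (hd : 1 ≤ Module.finrank ℝ E) :
    LocallyIntegrable (fun x : E => log ‖x‖ ^ 2) μ := by
  have hrpow : LocallyIntegrable (fun x : E => ‖x‖ ^ (-(1 / 2 : ℝ))) μ := by
    refine locallyIntegrable_of_norm_le_rpow hd (C := 1) (α := 1 / 2) ?_ ?_
      (measurable_norm.pow_const _).aestronglyMeasurable
    · have : (1 : ℝ) ≤ Module.finrank ℝ E := by exact_mod_cast hd
      linarith
    · exact Filter.Eventually.of_forall fun x => by
        rw [one_mul, norm_of_nonneg (rpow_nonneg (norm_nonneg x) _)]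
  have hmax : LocallyIntegrable (fun x : E => log (max ‖x‖ 1) ^ 2) μ :=
    (((continuous_norm.max continuous_const).log fun x => by positivity).pow 2).locallyIntegrable
  refine ((hrpow.smul (16 : ℝ)).add hmax).mono
    (measurable_norm.log.pow_const 2).aestronglyMeasurable (Filter.Eventually.of_forall fun x => ?_)
  simp only [Pi.add_apply, Pi.smul_apply, smul_eq_mul]
  rw [norm_of_nonneg (sq_nonneg _), norm_of_nonneg (by positivity)]
  exact sq_log_le_rpow_add_sq_log_max (norm_nonneg x)

lemma memLp_two_restrict_sum_mul_log_norm_sub (hd : 1 ≤ Module.finrank ℝ E) {ι : Type*}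
    [Fintype ι] (a : ι → ℝ) (y : ι → E) {K : Set E} (hK : IsCompact K) :
    MemLp (fun x => ∑ j, a j * log ‖x - y j‖) 2 (μ.restrict K) := by
  have hterm : ∀ j, MemLp (fun x => log ‖x - y j‖) 2 (μ.restrict K) := fun j =>
    (memLp_two_iff_integrable_sq (measurable_id.sub_const _).norm.log.aestronglyMeasurable).2
      (((locallyIntegrable_sq_log_norm hd).comp_sub_right (y j)).integrableOn_isCompact hK)
  exact memLp_finsetSum Finset.univ fun j _ => (hterm j).const_mul (a j)

theorem MeasureTheory.LocallyIntegrable.integrable_of_norm_le_div_pow {G : Type*}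
    [NormedAddCommGroup G] {f : E → G} {n : ℕ} {C R : ℝ} (hn : Module.finrank ℝ E < n)
    (hf : LocallyIntegrable f μ) (hdecay : ∀ x, R ≤ ‖x‖ → ‖f x‖ ≤ C / ‖x‖ ^ n) :
    Integrable f μ := by
  refine hf.integrable_of_isBigO_cocompact (g := fun x => (1 + ‖x‖) ^ (-(n : ℝ))) ?_
    ((integrable_one_add_norm (by exact_mod_cast hn)).integrableAtFilter _)
  refine Asymptotics.IsBigO.of_bound (|C| * 2 ^ n) ?_
  filter_upwards [tendsto_norm_cocompact_atTop.eventually_ge_atTop (max R 1)] with x hx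
  have hx₁ : 1 ≤ ‖x‖ := (le_max_right _ _).trans hx
  rw [rpow_neg (by positivity), rpow_natCast, norm_inv, norm_pow,
    norm_of_nonneg (by positivity : (0 : ℝ) ≤ 1 + ‖x‖)]
  calc ‖f x‖ ≤ |C| / ‖x‖ ^ n := (hdecay x ((le_max_left _ _).trans hx)).trans
        (div_le_div_of_nonneg_right (le_abs_self C) (by positivity))
    _ = |C| * 2 ^ n / (2 * ‖x‖) ^ n := by rw [mul_pow]; field_simp
    _ ≤ |C| * 2 ^ n / (1 + ‖x‖) ^ n := by gcongr; linarith
    _ = |C| * 2 ^ n * ((1 + ‖x‖) ^ n)⁻¹ := div_eq_mul_inv _ _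

end LocalIntegrability

theorem stmt_10_general (N : ℕ)
    (y : Fin N → EuclideanSpace ℝ (Fin 2))
    (a : Fin N → ℝ)
    (hsum : ∑ j, a j = 0) (hmom : ∑ j, a j • y j = 0) :
    MemLp (fun x : EuclideanSpace ℝ (Fin 2) =>
        -(1/(2*Real.pi)) * ∑ j, a j * Real.log ‖x - y j‖) 2 volume ∧
    ∃ C > (0:ℝ), ∃ R > (0:ℝ), ∀ x : EuclideanSpace ℝ (Fin 2), R ≤ ‖x‖ →
      |(-(1/(2*Real.pi)) * ∑ j, a j * Real.log ‖x - y j‖)| ≤ C / ‖x‖^2 := by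
  obtain ⟨C, hC, R, hR, hsum_decay⟩ := exists_abs_sum_mul_log_norm_sub_le_div_sq a y hsum hmom
  have hdecay : ∀ x : EuclideanSpace ℝ (Fin 2), R ≤ ‖x‖ →
      |-(1 / (2 * π)) * ∑ j, a j * log ‖x - y j‖| ≤ C / (2 * π) / ‖x‖ ^ 2 := fun x hx => by
    rw [abs_mul, abs_neg, abs_of_pos (by positivity)]
    calc 1 / (2 * π) * |∑ j, a j * log ‖x - y j‖| ≤ 1 / (2 * π) * (C / ‖x‖ ^ 2) :=
          mul_le_mul_of_nonneg_left (hsum_decay x hx) (by positivity)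
      _ = C / (2 * π) / ‖x‖ ^ 2 := by ring
  refine ⟨?_, C / (2 * π), by positivity, R, hR, hdecay⟩
  have hmeas : Measurable fun x : EuclideanSpace ℝ (Fin 2) =>
      -(1 / (2 * π)) * ∑ j, a j * log ‖x - y j‖ := by fun_prop
  have hloc : LocallyIntegrable (fun x : EuclideanSpace ℝ (Fin 2) =>
      (-(1 / (2 * π)) * ∑ j, a j * log ‖x - y j‖) ^ 2) volume :=
    locallyIntegrable_iff.2 fun K hK =>
      (memLp_two_iff_integrable_sq hmeas.aestronglyMeasurable).1
        ((memLp_two_restrict_sum_mul_log_norm_sub (by simp) a y hK).const_mul _)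
  rw [memLp_two_iff_integrable_sq hmeas.aestronglyMeasurable]
  refine hloc.integrable_of_norm_le_div_pow (n := 4) (C := (C / (2 * π)) ^ 2) (R := R) (by simp)
    fun x hx => ?_
  rw [norm_pow, norm_eq_abs]
  calc |-(1 / (2 * π)) * ∑ j, a j * log ‖x - y j‖| ^ 2 ≤ (C / (2 * π) / ‖x‖ ^ 2) ^ 2 :=
        pow_le_pow_left₀ (abs_nonneg _) (hdecay x hx) 2
    _ = (C / (2 * π)) ^ 2 / ‖x‖ ^ 4 := by ring

/-- If the `y_j` are distinct, `Σ a_j = 0` and `Σ a_j y_j = 0`,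
then `ψ(x) = -(2π)⁻¹ Σ a_j log|x - y_j|` belongs to `L²(ℝ²)` and decays like
`|x|⁻²` at infinity. -/
theorem stmt_10 (N : ℕ) (hN : 1 ≤ N)
    (y : Fin N → EuclideanSpace ℝ (Fin 2)) (hy : Function.Injective y)
    (a : Fin N → ℝ)
    (hsum : ∑ j, a j = 0) (hmom : ∑ j, a j • y j = 0) :
    MemLp (fun x : EuclideanSpace ℝ (Fin 2) =>
        -(1/(2*Real.pi)) * ∑ j, a j * Real.log ‖x - y j‖) 2 volume ∧
    ∃ C > (0:ℝ), ∃ R > (0:ℝ), ∀ x : EuclideanSpace ℝ (Fin 2), R ≤ ‖x‖ →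
      |(-(1/(2*Real.pi)) * ∑ j, a j * Real.log ‖x - y j‖)| ≤ C / ‖x‖^2 :=
  stmt_10_general N y a hsum hmom
end

section
/- Let 1 ≤ N ≤ 4, let y_1, …, y_N be distinct points in ℝ², and let α ∈ ℝ^N. Then the real linear subspace V = { a ∈ ℝ^N : Σ_{j=1}^N a_j = 0, Σ_{j=1}^N a_j y_j = 0 in ℝ², and D̃ a = 0 } has dimension at most 1. (Consequently, a zero-energy eigenvalue of the two-dimensional Schrödinger operator with point interactions at up to four centres is always non-degenerate.) -/
open Real Matrix
noncomputable section

/-- The real matrix `D̃(α,Y)`: diagonal entries `α_j`, off-diagonal entries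
`(2π)⁻¹ log|y_j - y_k|`. -/
def DtR (N : ℕ) (y : Fin N → EuclideanSpace ℝ (Fin 2)) (α : Fin N → ℝ) :
    Matrix (Fin N) (Fin N) ℝ :=
  Matrix.of fun j k => if j = k then α j else 1/(2*Real.pi) * Real.log ‖y j - y k‖

/-!
The space `V` is the orthogonal complement in `ℝ^N` of the span `W` of the constant vector `1`,
the coordinate vectors `Y₁, Y₂` of the points and the rows of `D̃`, so it suffices to show
`dim W ≥ N - 1`. If `1, Y₁, Y₂` are independent we are done since `N ≤ 4`. Otherwise the points
lie on a line, on which some linear combination `t` of `Y₁, Y₂` is an isometric coordinate;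
then `1, t` are independent, and for `N = 4` the row of `D̃` at the point with smallest `t` is
independent of them: otherwise `log` would be affine at three distinct positive numbers,
contradicting its strict concavity.
-/

open Module Submodule Set Function WithLp

lemma LinearIndependent.card_le_finrank_of_forall_mem {K V ι : Type*} [Field K]
    [AddCommGroup V] [Module K V] [FiniteDimensional K V] [Fintype ι] {v : ι → V}
    (hv : LinearIndependent K v) {S : Submodule K V} (hS : ∀ i, v i ∈ S) :
    Fintype.card ι ≤ finrank K S := by
  rw [← finrank_span_eq_card hv]
  exact Submodule.finrank_mono (span_le.mpr (range_subset_iff.mpr hS))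

lemma exists_smul_add_smul_eq_zero_of_finrank_le_one {K V : Type*} [Field K]
    [AddCommGroup V] [Module K V] [FiniteDimensional K V] {S : Submodule K V}
    (hS : finrank K S ≤ 1) {a b : V} (ha : a ∈ S) (hb : b ∈ S) :
    ∃ c d : K, (c ≠ 0 ∨ d ≠ 0) ∧ c • a + d • b = 0 := by
  by_contra! h
  have hab : LinearIndependent K ![a, b] :=
    LinearIndependent.pair_iff.mpr fun c d hcd => by
      by_contra hne
      exact h c d (not_and_or.mp hne) hcd
  have : 2 ≤ finrank K S := by
    simpa using hab.card_le_finrank_of_forall_mem (Fin.forall_fin_two.mpr ⟨ha, hb⟩)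
  omega

lemma Real.log_ne_add_mul_of_lt {x y z A B : ℝ} (hx : 0 < x) (hxy : x < y) (hyz : y < z)
    (hlx : log x = A + B * x) (hlz : log z = A + B * z) : log y ≠ A + B * y := by
  intro hly
  have := strictConcaveOn_log_Ioi.slope_anti_adjacent (mem_Ioi.mpr hx)
    (mem_Ioi.mpr (hx.trans (hxy.trans hyz))) hxy hyz
  rw [hlx, hly, hlz, show A + B * z - (A + B * y) = B * (z - y) by ring,
    show A + B * y - (A + B * x) = B * (y - x) by ring,
    mul_div_cancel_right₀ _ (sub_ne_zero.mpr hyz.ne'),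
    mul_div_cancel_right₀ _ (sub_ne_zero.mpr hxy.ne')] at this
  exact this.false

namespace EuclideanSpace

lemma norm_mul_norm_eq_abs_of_inner_eq_zero {x n : EuclideanSpace ℝ (Fin 2)}
    (h : inner ℝ n x = 0) : ‖x‖ * ‖n‖ = |n 0 * x 1 - n 1 * x 0| := by
  have h' : n 0 * x 0 + n 1 * x 1 = 0 := by
    simpa [inner_eq_star_dotProduct, dotProduct, Fin.sum_univ_two, mul_comm] using h
  rw [← abs_of_nonneg (by positivity : 0 ≤ ‖x‖ * ‖n‖), ← sq_eq_sq_iff_abs_eq_abs, mul_pow,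
    real_norm_sq_eq, real_norm_sq_eq]
  simp only [Fin.sum_univ_two]
  linear_combination (n 0 * x 0 + n 1 * x 1) * h'

lemma exists_norm_sub_eq_abs_of_inner_eq {ι : Type*} {y : ι → EuclideanSpace ℝ (Fin 2)}
    {n : EuclideanSpace ℝ (Fin 2)} (hn : n ≠ 0) {c : ℝ} (h : ∀ j, inner ℝ n (y j) = c) :
    ∃ p q : ℝ, ∀ j k, ‖y j - y k‖ = |(p * y j 0 + q * y j 1) - (p * y k 0 + q * y k 1)| := by
  have hn' : ‖n‖ ≠ 0 := norm_ne_zero_iff.mpr hn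
  refine ⟨-n 1 / ‖n‖, n 0 / ‖n‖, fun j k => ?_⟩
  have hjk : inner ℝ n (y j - y k) = 0 := by rw [inner_sub_right, h, h, sub_self]
  calc ‖y j - y k‖ = ‖y j - y k‖ * ‖n‖ / ‖n‖ := (mul_div_cancel_right₀ _ hn').symm
    _ = |n 0 * (y j - y k) 1 - n 1 * (y j - y k) 0| / |‖n‖| := by
      rw [norm_mul_norm_eq_abs_of_inner_eq_zero hjk, abs_norm]
    _ = _ := by
      rw [← abs_div]
      congr 1
      simp only [PiLp.sub_apply]
      field_simp
      ring

lemma exists_inner_eq_of_not_linearIndependent {ι : Type*} [Fintype ι] [Nonempty ι]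
    {y : ι → EuclideanSpace ℝ (Fin 2)}
    (h : ¬ LinearIndependent ℝ
      ![(toLp 2 1 : EuclideanSpace ℝ ι), toLp 2 fun j => y j 0, toLp 2 fun j => y j 1]) :
    ∃ n ≠ 0, ∃ c, ∀ j, inner ℝ n (y j) = c := by
  obtain ⟨g, hg, i, hi⟩ := Fintype.not_linearIndependent_iff.mp h
  have hev : ∀ j, g 0 + g 1 * y j 0 + g 2 * y j 1 = 0 := fun j => by
    simpa [Fin.sum_univ_three] using congrArg (· j) hg
  refine ⟨!₂[g 1, g 2], fun hn => hi ?_, -g 0, fun j => ?_⟩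
  · have h1 : g 1 = 0 := by simpa using congrArg (· 0) hn
    have h2 : g 2 = 0 := by simpa using congrArg (· 1) hn
    have h0 : g 0 = 0 := by simpa [h1, h2] using hev (Classical.arbitrary ι)
    fin_cases i <;> assumption
  · simp [inner_eq_star_dotProduct, dotProduct, Fin.sum_univ_two]
    linear_combination hev j

end EuclideanSpace

lemma linearIndependent_toLp_one_toLp {ι : Type*} [Fintype ι] {t : ι → ℝ} {j k : ι}
    (h : t j ≠ t k) : LinearIndependent ℝ ![(toLp 2 1 : EuclideanSpace ℝ ι), toLp 2 t] := by
  refine LinearIndependent.pair_iff.mpr fun s r hsr => ?_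
  have hev : ∀ i, s + r * t i = 0 := fun i => by simpa using congrArg (· i) hsr
  have hr : r = 0 := by
    have : r * (t j - t k) = 0 := by linear_combination hev j - hev k
    exact (mul_eq_zero.mp this).resolve_right (sub_ne_zero.mpr h)
  exact ⟨by simpa [hr] using hev j, hr⟩

lemma toLp_notMem_span_one_toLp_of_log {ι : Type*} [Fintype ι] {t r : ι → ℝ} {j k₁ k₂ k₃ : ι}
    (h₁ : t j < t k₁) (h₂ : t k₁ < t k₂) (h₃ : t k₂ < t k₃)
    (hr : ∀ k, t j < t k → r k = 1 / (2 * π) * log |t j - t k|) :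
    (toLp 2 r : EuclideanSpace ℝ ι) ∉ span ℝ (range ![toLp 2 1, toLp 2 t]) := by
  intro hmem
  obtain ⟨c, hc⟩ := (mem_span_range_iff_exists_fun ℝ).mp hmem
  have hev : ∀ k, c 0 + c 1 * t k = r k := fun k => by
    simpa [Fin.sum_univ_two] using congrArg (· k) hc
  have hlog : ∀ k, t j < t k →
      log (t k - t j) = 2 * π * (c 0 + c 1 * t j) + 2 * π * c 1 * (t k - t j) := by
    intro k hk
    have := hr k hk
    rw [← hev k, abs_sub_comm, abs_of_pos (sub_pos.mpr hk)] at this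
    field_simp at this
    linear_combination -this
  exact Real.log_ne_add_mul_of_lt (sub_pos.mpr h₁) (by linarith) (by linarith)
    (hlog k₁ h₁) (hlog k₃ (by linarith)) (hlog k₂ (by linarith))

variable {N : ℕ}

lemma le_finrank_add_one_of_log_rows (hN : N ≤ 4)
    {W : Submodule ℝ (EuclideanSpace ℝ (Fin N))} {t : Fin N → ℝ} (ht : Injective t)
    {R : Matrix (Fin N) (Fin N) ℝ} (hR : ∀ j k, j ≠ k → R j k = 1 / (2 * π) * log |t j - t k|)
    (h1 : toLp 2 1 ∈ W) (htW : toLp 2 t ∈ W) (hRW : ∀ j, toLp 2 (R j) ∈ W) :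
    N ≤ finrank ℝ W + 1 := by
  rcases le_or_gt N 1 with hN1 | hN2
  · omega
  rcases hN.lt_or_eq with hN3 | rfl
  · have hli := linearIndependent_toLp_one_toLp
      (ht.ne (a₁ := ⟨0, by omega⟩) (a₂ := ⟨1, by omega⟩) (by simp))
    have : 2 ≤ finrank ℝ W := by
      simpa using hli.card_le_finrank_of_forall_mem (Fin.forall_fin_two.mpr ⟨h1, htW⟩)
    omega
  · set σ := Tuple.sort t
    have hσ : StrictMono (t ∘ σ) :=
      (Tuple.monotone_sort t).strictMono_of_injective (ht.comp σ.injective)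
    have hli : LinearIndependent ℝ ![toLp 2 (R (σ 0)), toLp 2 1, toLp 2 t] :=
      linearIndependent_finCons.mpr
        ⟨linearIndependent_toLp_one_toLp (hσ.injective.ne (a₁ := 0) (a₂ := 1) (by decide)),
          toLp_notMem_span_one_toLp_of_log (hσ (by decide : (0 : Fin 4) < 1))
            (hσ (by decide : (1 : Fin 4) < 2)) (hσ (by decide : (2 : Fin 4) < 3))
            fun k hk => hR _ _ (ne_of_apply_ne t hk.ne)⟩
    have : 3 ≤ finrank ℝ W := by
      simpa using hli.card_le_finrank_of_forall_mem (by simp [Fin.forall_fin_succ, h1, htW, hRW])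
    omega

def constraintSpan (y : Fin N → EuclideanSpace ℝ (Fin 2)) (α : Fin N → ℝ) :
    Submodule ℝ (EuclideanSpace ℝ (Fin N)) :=
  span ℝ (insert (toLp 2 1) (range (fun i : Fin 2 => toLp 2 fun j => y j i) ∪
    range fun j => toLp 2 (DtR N y α j)))

lemma toLp_mem_orthogonal_constraintSpan {y : Fin N → EuclideanSpace ℝ (Fin 2)} {α a : Fin N → ℝ}
    (h1 : ∑ j, a j = 0) (h2 : ∑ j, a j • y j = 0) (h3 : DtR N y α *ᵥ a = 0) :
    toLp 2 a ∈ (constraintSpan y α)ᗮ := by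
  refine isOrtho_iff_le.mp (isOrtho_span.mpr ?_) (mem_span_singleton_self _)
  rintro _ rfl _ (rfl | ⟨i, rfl⟩ | ⟨j, rfl⟩) <;>
    simp only [EuclideanSpace.inner_toLp_toLp, dotProduct, star_trivial]
  · simpa using h1
  · simpa [mul_comm] using congrArg (· i) h2
  · simpa [mulVec, dotProduct] using congrFun h3 j

lemma le_finrank_constraintSpan_add_one (hN : N ≤ 4) {y : Fin N → EuclideanSpace ℝ (Fin 2)}
    (hy : Injective y) (α : Fin N → ℝ) : N ≤ finrank ℝ (constraintSpan y α) + 1 := by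
  obtain rfl | hN0 := N.eq_zero_or_pos
  · simp
  have : Nonempty (Fin N) := ⟨⟨0, hN0⟩⟩
  have h1 : toLp 2 1 ∈ constraintSpan y α := subset_span (mem_insert _ _)
  have hY : ∀ i, (toLp 2 fun j => y j i) ∈ constraintSpan y α := fun i =>
    subset_span (mem_insert_of_mem _ (Or.inl (mem_range_self i)))
  have hR : ∀ j, toLp 2 (DtR N y α j) ∈ constraintSpan y α := fun j =>
    subset_span (mem_insert_of_mem _ (Or.inr (mem_range_self j)))
  by_cases hli : LinearIndependent ℝ
      ![(toLp 2 1 : EuclideanSpace ℝ (Fin N)), toLp 2 fun j => y j 0, toLp 2 fun j => y j 1]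
  · have : 3 ≤ finrank ℝ (constraintSpan y α) := by
      simpa using hli.card_le_finrank_of_forall_mem (by simp [Fin.forall_fin_succ, h1, hY])
    omega
  obtain ⟨n, hn, c, hc⟩ := EuclideanSpace.exists_inner_eq_of_not_linearIndependent hli
  obtain ⟨p, q, hpq⟩ := EuclideanSpace.exists_norm_sub_eq_abs_of_inner_eq hn hc
  refine le_finrank_add_one_of_log_rows hN (t := fun j => p * y j 0 + q * y j 1)
    (fun j k hjk => hy ?_) (R := DtR N y α) (fun j k hjk => ?_) h1 ?_ hR
  · rw [← sub_eq_zero, ← norm_eq_zero, hpq, abs_eq_zero, sub_eq_zero]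
    exact hjk
  · simp [DtR, hjk, hpq]
  · have ht : (toLp 2 fun j => p * y j 0 + q * y j 1 : EuclideanSpace ℝ (Fin N)) =
        p • (toLp 2 fun j => y j 0) + q • (toLp 2 fun j => y j 1) := by
      ext j
      simp
    rw [ht]
    exact add_mem (smul_mem _ _ (hY 0)) (smul_mem _ _ (hY 1))

theorem stmt_11_general (N : ℕ) (hN4 : N ≤ 4)
    (y : Fin N → EuclideanSpace ℝ (Fin 2)) (hy : Function.Injective y)
    (α : Fin N → ℝ)
    (a b : Fin N → ℝ)
    (ha1 : ∑ j, a j = 0) (ha2 : ∑ j, a j • y j = 0) (ha3 : (DtR N y α).mulVec a = 0)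
    (hb1 : ∑ j, b j = 0) (hb2 : ∑ j, b j • y j = 0) (hb3 : (DtR N y α).mulVec b = 0) :
    ∃ c d : ℝ, (c ≠ 0 ∨ d ≠ 0) ∧ c • a + d • b = 0 := by
  have hW := le_finrank_constraintSpan_add_one hN4 hy α
  have hV : finrank ℝ (constraintSpan y α)ᗮ ≤ 1 := by
    have := (constraintSpan y α).finrank_add_finrank_orthogonal
    rw [finrank_euclideanSpace_fin] at this
    omega
  obtain ⟨c, d, hcd, h⟩ := exists_smul_add_smul_eq_zero_of_finrank_le_one hV
    (toLp_mem_orthogonal_constraintSpan ha1 ha2 ha3)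
    (toLp_mem_orthogonal_constraintSpan hb1 hb2 hb3)
  exact ⟨c, d, hcd, by simpa using congrArg ofLp h⟩

/-- For `N ≤ 4` distinct centres, the space
`V = {a ∈ ℝ^N : Σ a_j = 0, Σ a_j y_j = 0, D̃ a = 0}` has dimension at most 1,
i.e. any two of its elements are linearly dependent (zero modes are
non-degenerate for at most four centres). -/
theorem stmt_11 (N : ℕ) (hN1 : 1 ≤ N) (hN4 : N ≤ 4)
    (y : Fin N → EuclideanSpace ℝ (Fin 2)) (hy : Function.Injective y)
    (α : Fin N → ℝ)
    (a b : Fin N → ℝ)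
    (ha1 : ∑ j, a j = 0) (ha2 : ∑ j, a j • y j = 0) (ha3 : (DtR N y α).mulVec a = 0)
    (hb1 : ∑ j, b j = 0) (hb2 : ∑ j, b j • y j = 0) (hb3 : (DtR N y α).mulVec b = 0) :
    ∃ c d : ℝ, (c ≠ 0 ∨ d ≠ 0) ∧ c • a + d • b = 0 :=
  stmt_11_general N hN4 y hy α a b ha1 ha2 ha3 hb1 hb2 hb3
end
end

section
/- Let y_1, y_2, y_3 be three distinct collinear points in ℝ². Then there exist α = (α_1, α_2, α_3) ∈ ℝ³ and a nonzero vector a = (a_1, a_2, a_3) ∈ ℝ³ such that a_1 + a_2 + a_3 = 0, a_1 y_1 + a_2 y_2 + a_3 y_3 = 0 in ℝ², and D̃(α,Y) a = 0. (Consequently, for such α the two-dimensional Schrödinger operator with point interactions of strengths α at these three centres has an eigenvalue embedded at the threshold zero.) -/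
/-! Three distinct points `p + tⱼ • v` on a line satisfy the affine relation with coefficients
`(t₁ - t₂, t₂ - t₀, t₀ - t₁)`, none of which vanishes; since the diagonal of `D̃` is free, each
row of `D̃ a = 0` can then be solved for `αⱼ`, dividing by `aⱼ ≠ 0`. -/

open Real Matrix
noncomputable section

theorem Matrix.add_diagonal_neg_mulVec_div_mulVec_eq_zero {n K : Type*} [Fintype n]
    [DecidableEq n] [Field K] (A : Matrix n n K) {a : n → K} (ha : ∀ j, a j ≠ 0) :
    (A + diagonal fun j => -(A *ᵥ a) j / a j) *ᵥ a = 0 := by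
  ext j
  simp only [add_mulVec, mulVec_diagonal, Pi.add_apply, Pi.zero_apply]
  field_simp [ha j]
  ring

theorem DtR_eq_add_diagonal (N : ℕ) (y : Fin N → EuclideanSpace ℝ (Fin 2)) (α : Fin N → ℝ) :
    DtR N y α = DtR N y 0 + diagonal α := by
  ext j k
  by_cases hjk : j = k <;> simp [DtR, hjk]

theorem exists_DtR_mulVec_eq_zero {N : ℕ} (y : Fin N → EuclideanSpace ℝ (Fin 2))
    {a : Fin N → ℝ} (ha : ∀ j, a j ≠ 0) : ∃ α, DtR N y α *ᵥ a = 0 :=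
  ⟨_, by
    rw [DtR_eq_add_diagonal]
    exact (DtR N y 0).add_diagonal_neg_mulVec_div_mulVec_eq_zero ha⟩

theorem exists_affine_relation_of_collinear_fin_three {k V : Type*} [Field k]
    [AddCommGroup V] [Module k V] (y : Fin 3 → V) (hy : Function.Injective y)
    (hcol : Collinear k (Set.range y)) :
    ∃ a : Fin 3 → k, (∀ j, a j ≠ 0) ∧ ∑ j, a j = 0 ∧ ∑ j, a j • y j = 0 := by
  obtain ⟨v, hv⟩ := (collinear_iff_of_mem (Set.mem_range_self 0)).mp hcol
  choose t ht using fun j => hv (y j) (Set.mem_range_self j)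
  generalize y 0 = p at ht
  have ht_inj : Function.Injective t := fun j k hjk => hy (by rw [ht j, ht k, hjk])
  have hsub : ∀ {j k : Fin 3}, j ≠ k → t j - t k ≠ 0 :=
    fun hjk => sub_ne_zero.mpr (ht_inj.ne hjk)
  refine ⟨![t 1 - t 2, t 2 - t 0, t 0 - t 1], ?_, ?_, ?_⟩
  · intro j
    fin_cases j <;> exact hsub (by decide)
  · simp [Fin.sum_univ_three]
  · rw [Fin.sum_univ_three, ht 0, ht 1, ht 2]
    simp only [vadd_eq_add, cons_val_zero, cons_val_one, cons_val_two, head_cons, tail_cons]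
    module

/-- For three distinct collinear points `y_1, y_2, y_3 ∈ ℝ²`,
there exist strengths `α ∈ ℝ³` and a nonzero `a ∈ ℝ³` with `Σ a_j = 0`,
`Σ a_j y_j = 0` and `D̃(α,Y) a = 0` (hence a zero-energy eigenvalue exists). -/
theorem stmt_12
    (y : Fin 3 → EuclideanSpace ℝ (Fin 2)) (hy : Function.Injective y)
    (hcol : Collinear ℝ (Set.range y)) :
    ∃ α : Fin 3 → ℝ, ∃ a : Fin 3 → ℝ, a ≠ 0 ∧
      (∑ j, a j = 0) ∧ (∑ j, a j • y j = 0) ∧ (DtR 3 y α).mulVec a = 0 := by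
  obtain ⟨a, ha, hsum, hrel⟩ := exists_affine_relation_of_collinear_fin_three y hy hcol
  obtain ⟨α, hα⟩ := exists_DtR_mulVec_eq_zero y ha
  exact ⟨α, a, fun h => ha 0 (congrFun h 0), hsum, hrel, hα⟩
end
end

section
/- Let H be a complex Hilbert space, let A be a bounded linear operator on H, and let S be the orthogonal projection onto a closed subspace of H. Assume A + S has a bounded inverse, and set B = S − S (A+S)^{−1} S, which maps ran S into itself. Then A has a bounded inverse if and only if the restriction of B to ran S has a bounded inverse as an operator on ran S; and in that case A^{−1} = (A+S)^{−1} + (A+S)^{−1} S B^⊕ S (A+S)^{−1}, where B^⊕ denotes the bounded operator on H equal to the inverse of the restriction of B on ran S and equal to 0 on (ran S)^⊥. -/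
noncomputable section

/-- **Jensen–Nenciu lemma.** Let `A` be a bounded operator on a
complex Hilbert space `H` and `S` an orthogonal projection (a self-adjoint
idempotent).  If `A + S` is boundedly invertible, then `A` is boundedly
invertible iff the restriction of `B = S - S (A+S)⁻¹ S` to `ran S` is, the latter
being encoded by a pseudo-inverse `G` with `G = S G S`, `G B = S`, `B G = S`;
and in that case `A⁻¹ = (A+S)⁻¹ + (A+S)⁻¹ S G S (A+S)⁻¹`. -/
theorem stmt_13
    {H : Type*} [NormedAddCommGroup H] [InnerProductSpace ℂ H] [CompleteSpace H]
    (A S : H →L[ℂ] H)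
    -- S is the orthogonal projection onto a closed subspace of H :
    (hS1 : S * S = S) (hS2 : IsSelfAdjoint S)
    -- A + S has a bounded inverse J :
    (J : H →L[ℂ] H) (hJ1 : (A + S) * J = 1) (hJ2 : J * (A + S) = 1) :
    (IsUnit A ↔
      ∃ G : H →L[ℂ] H, G = S * G * S ∧
        G * (S - S * J * S) = S ∧ (S - S * J * S) * G = S) ∧
    (∀ G : H →L[ℂ] H, G = S * G * S →
      G * (S - S * J * S) = S → (S - S * J * S) * G = S →
      ∀ Ai : H →L[ℂ] H, A * Ai = 1 → Ai * A = 1 →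
        Ai = J + J * S * G * S * J) := by
  have h1 : A * J + S * J = 1 := by rw [← add_mul]; exact hJ1
  have h2 : J * A + J * S = 1 := by rw [← mul_add]; exact hJ2
  have hSJ : S * J = 1 - A * J := eq_sub_of_add_eq' h1
  have hAJ : A * J = 1 - S * J := eq_sub_of_add_eq h1
  have hJS : J * S = 1 - J * A := eq_sub_of_add_eq' h2
  -- B = S - S J S equals A J S and S J A
  have b1 : S - S * J * S = A * J * S := by
    rw [hSJ, sub_mul, one_mul, sub_sub_cancel]
  have b2 : S - S * J * S = S * J * A := by
    have h : S * J * S = S - S * J * A := by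
      rw [mul_assoc S J S, hJS, mul_sub, mul_one, ← mul_assoc]
    rw [h, sub_sub_cancel]
  -- key lemma: any pseudo-inverse G gives a two-sided inverse of A
  have key : ∀ G : H →L[ℂ] H, G = S * G * S →
      G * (S - S * J * S) = S → (S - S * J * S) * G = S →
      A * (J + J * S * G * S * J) = 1 ∧ (J + J * S * G * S * J) * A = 1 := by
    intro G hG hGB hBG
    rw [b1] at hBG  -- A*J*S*G = S
    rw [b2] at hGB  -- G*(S*J*A) = S
    constructor
    · rw [mul_add]
      rw [show A * (J * S * G * S * J) = A * J * S * G * S * J from by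
        noncomm_ring]
      rw [hBG, hS1]
      exact h1
    · rw [add_mul]
      have h3 : J * S * G * S * J * A = J * S := by
        calc J * S * G * S * J * A = J * S * (G * (S * J * A)) := by noncomm_ring
          _ = J * S * S := by rw [hGB]
          _ = J * S := by rw [mul_assoc, hS1]
      rw [h3]
      exact h2
  refine ⟨⟨?_, ?_⟩, ?_⟩
  · -- IsUnit A → ∃ G
    intro hA
    obtain ⟨Ai, hAi1, hAi2⟩ := isUnit_iff_exists.mp hA
    have hSAJ : S * (A * J) = S - S * J := by
      rw [hAJ, mul_sub, mul_one, ← mul_assoc, hS1]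
    have hX : (S - S * J) * S = A * J * S := by
      rw [sub_mul, hS1]; exact b1
    refine ⟨S + S * Ai * S, ?_, ?_, ?_⟩
    · -- S + S*Ai*S = S*(S + S*Ai*S)*S
      calc S + S * Ai * S = (S * S) * S + ((S * S) * Ai) * (S * S) := by
            simp only [hS1]
        _ = S * (S + S * Ai * S) * S := by noncomm_ring
    · -- (S + S*Ai*S)*(S - S*J*S) = S
      rw [b1]
      calc (S + S * Ai * S) * (A * J * S)
          = (S * (A * J)) * S + (S * Ai) * ((S * (A * J)) * S) := by noncomm_ring
        _ = (S - S * J) * S + (S * Ai) * ((S - S * J) * S) := by rw [hSAJ]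
        _ = A * J * S + (S * Ai) * (A * J * S) := by rw [hX]
        _ = A * J * S + (S * (Ai * A)) * (J * S) := by noncomm_ring
        _ = A * J * S + S * (J * S) := by rw [hAi2, mul_one]
        _ = A * J * S + S * J * S := by noncomm_ring
        _ = (S - S * J * S) + S * J * S := by rw [b1]
        _ = S := by abel
    · -- (S - S*J*S)*(S + S*Ai*S) = S
      rw [b1]
      calc (A * J * S) * (S + S * Ai * S)
          = (A * J) * (S * S) + ((A * J) * (S * S)) * (Ai * S) := by noncomm_ring
        _ = (A * J) * S + ((A * J) * S) * (Ai * S) := by rw [hS1]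
        _ = A * J * S + (A * (J * S)) * (Ai * S) := by noncomm_ring
        _ = A * J * S + (A * (1 - J * A)) * (Ai * S) := by rw [hJS]
        _ = A * J * S + (A * Ai) * S - (A * J) * ((A * Ai) * S) := by noncomm_ring
        _ = A * J * S + 1 * S - (A * J) * (1 * S) := by rw [hAi1]
        _ = S := by noncomm_ring
  · -- ∃ G → IsUnit A
    rintro ⟨G, hG, hGB, hBG⟩
    obtain ⟨k1, k2⟩ := key G hG hGB hBG
    exact isUnit_iff_exists.mpr ⟨_, k1, k2⟩
  · -- inverse formula
    intro G hG hGB hBG Ai hAi1 hAi2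
    exact left_inv_eq_right_inv hAi2 (key G hG hGB hBG).1
end
end
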